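/- arXiv:2203.09429 — 7 statements merged into one kernel-verified Lean document; each statement's English description precedes it below -/
import Mathlib

section
/- Let d ≥ 1 and let {b_j}_{j=1}^{d} and {c_k}_{k=1}^{d} be two orthonormal bases of ℂ^d. Then ∑_{j,k=1}^{d} √(1 − |⟨b_j, c_k⟩|²) = d·√(d(d−1)) if and only if the two bases are mutually unbiased, i.e. |⟨b_j, c_k⟩|² = 1/d for all j,k. -/
/-!
Put `y j k = 1 - ‖⟪b j, c k⟫‖²`. Parseval in the basis `c` gives `∑ k, ‖⟪b j, c k⟫‖² = 1`, so the
`d²` numbers `y j k ≥ 0` add up to `d² · (d - 1) / d`. By Cauchy–Schwarz,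
`∑ √(y j k) ≤ d² · √((d - 1) / d) = d · √(d (d - 1))`, with equality exactly when all the `y j k`
are equal, i.e. all equal to `(d - 1) / d`.
-/

open Finset
open scoped ComplexInnerProductSpace

theorem sum_sqrt_eq_card_mul_sqrt_iff {ι : Type*} {s : Finset ι} {f : ι → ℝ} {a : ℝ}
    (hf : ∀ i ∈ s, 0 ≤ f i) (ha : 0 ≤ a) (hsum : ∑ i ∈ s, f i = #s * a) :
    ∑ i ∈ s, √(f i) = #s * √a ↔ ∀ i ∈ s, f i = a := by
  refine ⟨fun h i hi => ?_, fun h => ?_⟩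
  · -- `∑ (√fᵢ - √a)² = 2 #s a - 2 √a ∑ √fᵢ`, which vanishes in the equality case.
    have hdev : ∑ i ∈ s, (√(f i) - √a) ^ 2 = 0 :=
      calc ∑ i ∈ s, (√(f i) - √a) ^ 2 = ∑ i ∈ s, (f i + a) - 2 * √a * ∑ i ∈ s, √(f i) := by
            rw [mul_sum, ← sum_sub_distrib]
            refine sum_congr rfl fun i hi => ?_
            rw [sub_sq, Real.sq_sqrt (hf i hi), Real.sq_sqrt ha]
            ring
        _ = 0 := by
            rw [sum_add_distrib, hsum, h, sum_const, nsmul_eq_mul]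
            linear_combination (-2 * (#s : ℝ)) * Real.sq_sqrt ha
    have hi' := (sum_eq_zero_iff_of_nonneg fun i _ => sq_nonneg (√(f i) - √a)).mp hdev i hi
    rw [pow_eq_zero_iff two_ne_zero, sub_eq_zero] at hi'
    rw [← Real.sq_sqrt (hf i hi), ← Real.sq_sqrt ha, hi']
  · rw [sum_congr rfl fun i hi => by rw [h i hi], sum_const, nsmul_eq_mul]

theorem sum_one_sub_sq_norm_inner_of_orthonormal {𝕜 E ι κ : Type*} [RCLike 𝕜]
    [NormedAddCommGroup E] [InnerProductSpace 𝕜 E] [Fintype ι] [Fintype κ] {b : ι → E}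
    {c : κ → E} (hb : ∀ j, ‖b j‖ = 1) (hc : Orthonormal 𝕜 c)
    (hcspan : Submodule.span 𝕜 (Set.range c) = ⊤) :
    ∑ p : ι × κ, (1 - ‖inner 𝕜 (b p.1) (c p.2)‖ ^ 2) = Fintype.card ι * ((Fintype.card κ : ℝ) - 1) := by
  have hrow (j : ι) : ∑ k, ‖inner 𝕜 (b j) (c k)‖ ^ 2 = 1 := by
    simpa [hb j] using (OrthonormalBasis.mk hc hcspan.ge).sum_sq_norm_inner_left (b j)
  simp [sum_sub_distrib, Fintype.sum_prod_type' fun j k => ‖inner 𝕜 (b j) (c k)‖ ^ 2, hrow]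
  ring

theorem stmt_2_general (d : ℕ) (hd : 1 ≤ d)
    (b c : Fin d → EuclideanSpace ℂ (Fin d))
    (hb : Orthonormal ℂ b) (hc : Orthonormal ℂ c)
    (hcspan : Submodule.span ℂ (Set.range c) = ⊤) :
    (∑ j, ∑ k, Real.sqrt (1 - ‖⟪b j, c k⟫‖ ^ 2)) = d * Real.sqrt (d * (d - 1)) ↔
      ∀ j k, ‖⟪b j, c k⟫‖ ^ 2 = 1 / d := by
  have hd1 : (1 : ℝ) ≤ d := by exact_mod_cast hd
  have hd0 : (0 : ℝ) < d := one_pos.trans_le hd1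
  have hcard : (#(univ : Finset (Fin d × Fin d)) : ℝ) = d * d := by simp
  have hnonneg (p : Fin d × Fin d) : 0 ≤ 1 - ‖⟪b p.1, c p.2⟫‖ ^ 2 := by
    have := norm_inner_le_norm (𝕜 := ℂ) (b p.1) (c p.2)
    rw [hb.1, hc.1, one_mul] at this
    nlinarith [norm_nonneg ⟪b p.1, c p.2⟫]
  have hsum : ∑ p : Fin d × Fin d, (1 - ‖⟪b p.1, c p.2⟫‖ ^ 2)
      = #(univ : Finset (Fin d × Fin d)) * (((d : ℝ) - 1) / d) := by
    rw [sum_one_sub_sq_norm_inner_of_orthonormal hb.1 hc hcspan, hcard, Fintype.card_fin]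
    field_simp
  have hrhs : (d : ℝ) * √(d * (d - 1))
      = #(univ : Finset (Fin d × Fin d)) * √((d - 1) / d) := by
    rw [show (d : ℝ) * (d - 1) = d ^ 2 * ((d - 1) / d) by field_simp, Real.sqrt_mul (by positivity),
      Real.sqrt_sq hd0.le, hcard]
    ring
  have hmub : ((d : ℝ) - 1) / d = 1 - 1 / d := by rw [sub_div, div_self hd0.ne']
  rw [← Fintype.sum_prod_type' (fun j k => √(1 - ‖⟪b j, c k⟫‖ ^ 2)), hrhs,
    sum_sqrt_eq_card_mul_sqrt_iff (fun p _ => hnonneg p) (div_nonneg (sub_nonneg.2 hd1) hd0.le)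
      hsum, hmub]
  simp [Prod.forall]

theorem stmt_2 (d : ℕ) (hd : 1 ≤ d)
    (b c : Fin d → EuclideanSpace ℂ (Fin d))
    (hb : Orthonormal ℂ b) (hc : Orthonormal ℂ c)
    (hbspan : Submodule.span ℂ (Set.range b) = ⊤)
    (hcspan : Submodule.span ℂ (Set.range c) = ⊤) :
    (∑ j, ∑ k, Real.sqrt (1 - ‖⟪b j, c k⟫‖ ^ 2)) = d * Real.sqrt (d * (d - 1)) ↔
      ∀ j k, ‖⟪b j, c k⟫‖ ^ 2 = 1 / d :=
  stmt_2_general d hd b c hb hc hcspan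
end

section
/- Let d ≥ 1, n ≥ 2, and let {b^y_j}_{j=1}^{d}, y = 1,…,n, be n orthonormal bases of ℂ^d. Define W = (2/d) · ∑_{1 ≤ y < z ≤ n} ∑_{j,k=1}^{d} √(1 − |⟨b^y_j, b^z_k⟩|²). Then W ≤ n(n−1)·√(d(d−1)). -/
/-!
Fix two of the bases. Parseval in the second basis makes every row of the `d × d` matrix of
`1 - |⟨b^y_j, b^z_k⟩|²` sum to `d - 1`, so its `d²` entries add up to `d (d - 1)`, and
Cauchy–Schwarz bounds the sum of their square roots by `√(d² · d (d - 1)) = d √(d (d - 1))`.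
Summing over the `n (n - 1) / 2` pairs `y < z` gives the bound.
-/

open Finset
open scoped ComplexInnerProductSpace InnerProductSpace

lemma Real.sum_sqrt_le_sqrt_card_mul_sum {ι : Type*} (s : Finset ι) {f : ι → ℝ}
    (hf : ∀ i, 0 ≤ f i) : ∑ i ∈ s, √(f i) ≤ √(#s * ∑ i ∈ s, f i) := by
  have h := Real.sum_sqrt_mul_sqrt_le s (fun _ ↦ zero_le_one) hf
  simp only [Real.sqrt_one, one_mul, sum_const, nsmul_eq_mul, mul_one] at h
  rwa [Real.sqrt_mul (Nat.cast_nonneg _)]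

lemma card_filter_fst_lt_snd_eq_choose_two {α : Type*} [Fintype α] [LinearOrder α] :
    #{p : α × α | p.1 < p.2} = (Fintype.card α).choose 2 := by
  rw [← univ_product_univ, card_product_filter_lt, card_univ]

section PairOfBases

variable {𝕜 E ι κ : Type*} [RCLike 𝕜] [NormedAddCommGroup E] [InnerProductSpace 𝕜 E]
  [Fintype ι] [Fintype κ]

lemma OrthonormalBasis.sum_one_sub_sq_norm_inner_left (B : OrthonormalBasis κ 𝕜 E) {x : E}
    (hx : ‖x‖ = 1) : ∑ k, (1 - ‖⟪x, B k⟫_𝕜‖ ^ 2) = (Fintype.card κ : ℝ) - 1 := by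
  rw [sum_sub_distrib, B.sum_sq_norm_inner_left, hx, sum_const, card_univ, nsmul_one, one_pow]

lemma sum_sum_sqrt_one_sub_sq_norm_inner_le (u : ι → E) (hu : ∀ j, ‖u j‖ = 1)
    (B : OrthonormalBasis κ 𝕜 E) :
    ∑ j, ∑ k, √(1 - ‖⟪u j, B k⟫_𝕜‖ ^ 2)
      ≤ Fintype.card ι * √(Fintype.card κ * (Fintype.card κ - 1)) := by
  set f : ι × κ → ℝ := fun p ↦ 1 - ‖⟪u p.1, B p.2⟫_𝕜‖ ^ 2
  have hf : ∀ p, 0 ≤ f p := fun p ↦ by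
    have h := norm_inner_le_norm (𝕜 := 𝕜) (u p.1) (B p.2)
    rw [hu, B.orthonormal.norm_eq_one, one_mul] at h
    simp only [f, sub_nonneg]
    exact pow_le_one₀ (norm_nonneg _) h
  have hsum : ∑ p, f p = Fintype.card ι * (Fintype.card κ - 1) := by
    simp only [f, Fintype.sum_prod_type, B.sum_one_sub_sq_norm_inner_left (hu _), sum_const,
      card_univ, nsmul_eq_mul]
  calc ∑ j, ∑ k, √(1 - ‖⟪u j, B k⟫_𝕜‖ ^ 2) = ∑ p, √(f p) := by rw [← Fintype.sum_prod_type']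
    _ ≤ √(#(univ : Finset (ι × κ)) * ∑ p, f p) := Real.sum_sqrt_le_sqrt_card_mul_sum _ hf
    _ = √((Fintype.card ι : ℝ) ^ 2 * (Fintype.card κ * (Fintype.card κ - 1))) := by
        rw [hsum, card_univ, Fintype.card_prod]; push_cast; congr 1; ring
    _ = Fintype.card ι * √(Fintype.card κ * (Fintype.card κ - 1)) := by
        rw [Real.sqrt_mul (by positivity), Real.sqrt_sq (Nat.cast_nonneg _)]

end PairOfBases

theorem stmt_3_general (d n : ℕ) (hd : 1 ≤ d)
    (b : Fin n → Fin d → EuclideanSpace ℂ (Fin d))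
    (hb : ∀ y, Orthonormal ℂ (b y))
    (hbspan : ∀ y, Submodule.span ℂ (Set.range (b y)) = ⊤) :
    (2 / d) * ∑ p ∈ Finset.univ.filter (fun p : Fin n × Fin n => p.1 < p.2),
        ∑ j, ∑ k, Real.sqrt (1 - ‖⟪b p.1 j, b p.2 k⟫‖ ^ 2)
      ≤ n * (n - 1) * Real.sqrt (d * (d - 1)) := by
  have hd0 : (d : ℝ) ≠ 0 := by positivity
  let B y : OrthonormalBasis (Fin d) ℂ (EuclideanSpace ℂ (Fin d)) :=
    OrthonormalBasis.mk (hb y) (hbspan y).ge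
  have hpair (y z : Fin n) :
      ∑ j, ∑ k, √(1 - ‖⟪b y j, b z k⟫‖ ^ 2) ≤ d * √(d * (d - 1)) := by
    simpa only [B, OrthonormalBasis.coe_mk, Fintype.card_fin] using
      sum_sum_sqrt_one_sub_sq_norm_inner_le (b y) (hb y).norm_eq_one (B z)
  have hpairs : (2 : ℝ) * #{p : Fin n × Fin n | p.1 < p.2} = n * (n - 1) := by
    rw [card_filter_fst_lt_snd_eq_choose_two, Fintype.card_fin, Nat.cast_choose_two]; ring
  calc _ ≤ (2 / d) * (#{p : Fin n × Fin n | p.1 < p.2} * (d * √(d * (d - 1)))) := by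
        gcongr
        exact (sum_le_card_nsmul _ _ _ fun p _ ↦ hpair p.1 p.2).trans_eq (nsmul_eq_mul _ _)
    _ = n * (n - 1) * √(d * (d - 1)) := by
        rw [← hpairs]; field_simp

theorem stmt_3 (d n : ℕ) (hd : 1 ≤ d) (hn : 2 ≤ n)
    (b : Fin n → Fin d → EuclideanSpace ℂ (Fin d))
    (hb : ∀ y, Orthonormal ℂ (b y))
    (hbspan : ∀ y, Submodule.span ℂ (Set.range (b y)) = ⊤) :
    (2 / d) * ∑ p ∈ Finset.univ.filter (fun p : Fin n × Fin n => p.1 < p.2),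
        ∑ j, ∑ k, Real.sqrt (1 - ‖⟪b p.1 j, b p.2 k⟫‖ ^ 2)
      ≤ n * (n - 1) * Real.sqrt (d * (d - 1)) :=
  stmt_3_general d n hd b hb hbspan
end

section
/- Let d ≥ 1, n ≥ 2, and let {b^y_j}_{j=1}^{d}, y = 1,…,n, be n orthonormal bases of ℂ^d. Then (2/d) · ∑_{1 ≤ y < z ≤ n} ∑_{j,k=1}^{d} √(1 − |⟨b^y_j, b^z_k⟩|²) = n(n−1)·√(d(d−1)) if and only if the bases are pairwise mutually unbiased, i.e. |⟨b^y_j, b^z_k⟩|² = 1/d for all y ≠ z and all j,k. -/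
/-! For a unit vector `x` and an orthonormal basis `(v k)` of a `d`-dimensional space, Parseval
says that the numbers `t k = ‖⟪x, v k⟫‖ ^ 2` form a probability vector. Jensen's inequality for the
strictly concave `√` then gives `∑ k, √(1 - t k) ≤ d * √((d - 1) / d) = √(d * (d - 1))`, with
equality iff `t k = 1 / d` for all `k`. Summing over `j` and over the `n * (n - 1) / 2` pairs
`y < z` bounds the MUB-ness measure by `n * (n - 1) * √(d * (d - 1))`, and the bound is attained
iff each of the summed bounds is. -/

open Finset
open scoped ComplexInnerProductSpace

theorem Finset.sum_eq_card_nsmul_iff_of_le {ι M : Type*} [AddCommMonoid M] [PartialOrder M]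
    [IsOrderedCancelAddMonoid M] {s : Finset ι} {f : ι → M} {c : M} (h : ∀ i ∈ s, f i ≤ c) :
    ∑ i ∈ s, f i = #s • c ↔ ∀ i ∈ s, f i = c := by
  rw [← sum_const]
  exact sum_eq_sum_iff_of_le h

theorem Finset.forall_mem_filter_lt_iff_forall_ne {α : Type*} [Fintype α] [LinearOrder α]
    {R : α → α → Prop} (hR : ∀ y z, R y z → R z y) :
    (∀ p ∈ univ.filter (fun p : α × α ↦ p.1 < p.2), R p.1 p.2) ↔ ∀ y z, y ≠ z → R y z := by
  simp only [mem_filter, mem_univ, true_and, Prod.forall]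
  refine ⟨fun h y z hyz ↦ ?_, fun h y z hyz ↦ h y z hyz.ne⟩
  rcases hyz.lt_or_gt with hlt | hgt
  · exact h y z hlt
  · exact hR z y (h z y hgt)

lemma Real.sqrt_mul_eq_mul_sqrt_div {a : ℝ} (ha : 0 ≤ a) (x : ℝ) : √(a * x) = a * √(x / a) := by
  rcases ha.eq_or_lt with rfl | ha
  · simp
  rw [← Real.sqrt_sq ha.le, ← Real.sqrt_mul (sq_nonneg a), Real.sqrt_sq ha.le]
  congr 1
  field_simp

section StdSimplex

variable {κ : Type*} [Fintype κ] {t : κ → ℝ}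

lemma one_sub_mem_Ici_of_mem_stdSimplex (ht : t ∈ stdSimplex ℝ κ) (k : κ) :
    1 - t k ∈ Set.Ici 0 := by
  have := single_le_sum (fun i _ ↦ ht.1 i) (mem_univ k)
  simp only [Set.mem_Ici, sub_nonneg]
  linarith [ht.2]

lemma card_pos_of_mem_stdSimplex (ht : t ∈ stdSimplex ℝ κ) : 0 < (Fintype.card κ : ℝ) := by
  have : Nonempty κ := by
    by_contra h
    simpa [not_nonempty_iff.mp h] using ht.2
  exact_mod_cast Fintype.card_pos

lemma sum_uniform_smul_one_sub_of_mem_stdSimplex (ht : t ∈ stdSimplex ℝ κ) :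
    ∑ k, (1 / (Fintype.card κ : ℝ)) • (1 - t k)
      = ((Fintype.card κ : ℝ) - 1) / Fintype.card κ := by
  simp only [smul_eq_mul, ← mul_sum, sum_sub_distrib, ht.2, sum_const, card_univ, nsmul_eq_mul,
    mul_one]
  ring

lemma sum_sqrt_one_sub_le_of_mem_stdSimplex (ht : t ∈ stdSimplex ℝ κ) :
    ∑ k, √(1 - t k) ≤ √(Fintype.card κ * (Fintype.card κ - 1)) := by
  have hN := card_pos_of_mem_stdSimplex ht
  have hjensen := Real.strictConcaveOn_sqrt.concaveOn.le_map_sum (t := univ)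
    (w := fun _ ↦ 1 / (Fintype.card κ : ℝ)) (p := fun k ↦ 1 - t k) (fun _ _ ↦ by positivity)
    (by simp [hN.ne']) (fun k _ ↦ one_sub_mem_Ici_of_mem_stdSimplex ht k)
  rw [sum_uniform_smul_one_sub_of_mem_stdSimplex ht, ← smul_sum, smul_eq_mul] at hjensen
  rw [Real.sqrt_mul_eq_mul_sqrt_div hN.le]
  have := mul_le_mul_of_nonneg_left hjensen hN.le
  rwa [← mul_assoc, mul_one_div_cancel hN.ne', one_mul] at this

lemma sum_sqrt_one_sub_eq_iff_of_mem_stdSimplex (ht : t ∈ stdSimplex ℝ κ) :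
    ∑ k, √(1 - t k) = √(Fintype.card κ * (Fintype.card κ - 1)) ↔
      ∀ k, t k = 1 / Fintype.card κ := by
  have hN := card_pos_of_mem_stdSimplex ht
  have hjensen := Real.strictConcaveOn_sqrt.map_sum_eq_iff (t := univ)
    (w := fun _ ↦ 1 / (Fintype.card κ : ℝ)) (p := fun k ↦ 1 - t k) (fun _ _ ↦ by positivity)
    (by simp [hN.ne']) (fun k _ ↦ one_sub_mem_Ici_of_mem_stdSimplex ht k)
  rw [sum_uniform_smul_one_sub_of_mem_stdSimplex ht, ← smul_sum, smul_eq_mul, one_div] at hjensen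
  rw [Real.sqrt_mul_eq_mul_sqrt_div hN.le, eq_comm, ← eq_inv_mul_iff_mul_eq₀ hN.ne', hjensen]
  simp only [mem_univ, true_implies, sub_div, div_self hN.ne', sub_right_inj, one_div]

end StdSimplex

section PairsOfBases

variable {𝕜 E ι κ : Type*} [RCLike 𝕜] [NormedAddCommGroup E] [InnerProductSpace 𝕜 E]
  [Fintype ι] [Fintype κ]

theorem OrthonormalBasis.norm_inner_sq_mem_stdSimplex (v : OrthonormalBasis κ 𝕜 E) {x : E}
    (hx : ‖x‖ = 1) : (fun k ↦ ‖inner 𝕜 x (v k)‖ ^ 2) ∈ stdSimplex ℝ κ :=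
  ⟨fun _ ↦ by positivity, by rw [v.sum_sq_norm_inner_left, hx, one_pow]⟩

variable {u : ι → E}

theorem sum_sqrt_one_sub_norm_inner_sq_le (hu : ∀ j, ‖u j‖ = 1) (v : OrthonormalBasis κ 𝕜 E) :
    ∑ j, ∑ k, √(1 - ‖inner 𝕜 (u j) (v k)‖ ^ 2)
      ≤ Fintype.card ι * √(Fintype.card κ * (Fintype.card κ - 1)) := by
  calc ∑ j, ∑ k, √(1 - ‖inner 𝕜 (u j) (v k)‖ ^ 2)
      ≤ ∑ _j : ι, √(Fintype.card κ * (Fintype.card κ - 1)) :=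
        sum_le_sum fun j _ ↦ sum_sqrt_one_sub_le_of_mem_stdSimplex
          (v.norm_inner_sq_mem_stdSimplex (hu j))
    _ = _ := by simp

theorem sum_sqrt_one_sub_norm_inner_sq_eq_iff (hu : ∀ j, ‖u j‖ = 1)
    (v : OrthonormalBasis κ 𝕜 E) :
    ∑ j, ∑ k, √(1 - ‖inner 𝕜 (u j) (v k)‖ ^ 2)
        = Fintype.card ι * √(Fintype.card κ * (Fintype.card κ - 1)) ↔
      ∀ j k, ‖inner 𝕜 (u j) (v k)‖ ^ 2 = 1 / Fintype.card κ := by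
  rw [← card_univ, ← nsmul_eq_mul, sum_eq_card_nsmul_iff_of_le fun j _ ↦
    sum_sqrt_one_sub_le_of_mem_stdSimplex (v.norm_inner_sq_mem_stdSimplex (hu j))]
  simp only [mem_univ, true_implies,
    sum_sqrt_one_sub_eq_iff_of_mem_stdSimplex (v.norm_inner_sq_mem_stdSimplex (hu _))]

end PairsOfBases

theorem stmt_4_general (d n : ℕ) (hd : 1 ≤ d)
    (b : Fin n → Fin d → EuclideanSpace ℂ (Fin d))
    (hb : ∀ y, Orthonormal ℂ (b y))
    (hbspan : ∀ y, Submodule.span ℂ (Set.range (b y)) = ⊤) :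
    (2 / d) * ∑ p ∈ Finset.univ.filter (fun p : Fin n × Fin n => p.1 < p.2),
        ∑ j, ∑ k, Real.sqrt (1 - ‖⟪b p.1 j, b p.2 k⟫‖ ^ 2)
      = n * (n - 1) * Real.sqrt (d * (d - 1)) ↔
      ∀ y z, y ≠ z → ∀ j k, ‖⟪b y j, b z k⟫‖ ^ 2 = 1 / d := by
  let B (z : Fin n) : OrthonormalBasis (Fin d) ℂ (EuclideanSpace ℂ (Fin d)) :=
    OrthonormalBasis.mk (hb z) (hbspan z).ge
  have hB (z : Fin n) : ⇑(B z) = b z := OrthonormalBasis.coe_mk _ _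
  have hpair_le (y z : Fin n) := sum_sqrt_one_sub_norm_inner_sq_le (fun j ↦ (hb y).1 j) (B z)
  have hpair_eq (y z : Fin n) :=
    sum_sqrt_one_sub_norm_inner_sq_eq_iff (fun j ↦ (hb y).1 j) (B z)
  simp only [hB, Fintype.card_fin] at hpair_le hpair_eq
  have hcard : (#(univ.filter fun p : Fin n × Fin n ↦ p.1 < p.2) : ℝ) = n * (n - 1) / 2 := by
    rw [Fintype.card_product_filter_lt, Fintype.card_fin, Nat.cast_choose_two]
  have hd0 : (d : ℝ) ≠ 0 := Nat.cast_ne_zero.mpr (Nat.one_le_iff_ne_zero.mp hd)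
  rw [← forall_mem_filter_lt_iff_forall_ne fun y z h j k ↦ by rw [norm_inner_symm]; exact h k j]
  simp only [← hpair_eq]
  rw [← sum_eq_card_nsmul_iff_of_le fun p _ ↦ hpair_le p.1 p.2, nsmul_eq_mul, hcard]
  constructor <;> intro h <;> field_simp at h ⊢ <;> linarith

theorem stmt_4 (d n : ℕ) (hd : 1 ≤ d) (hn : 2 ≤ n)
    (b : Fin n → Fin d → EuclideanSpace ℂ (Fin d))
    (hb : ∀ y, Orthonormal ℂ (b y))
    (hbspan : ∀ y, Submodule.span ℂ (Set.range (b y)) = ⊤) :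
    (2 / d) * ∑ p ∈ Finset.univ.filter (fun p : Fin n × Fin n => p.1 < p.2),
        ∑ j, ∑ k, Real.sqrt (1 - ‖⟪b p.1 j, b p.2 k⟫‖ ^ 2)
      = n * (n - 1) * Real.sqrt (d * (d - 1)) ↔
      ∀ y z, y ≠ z → ∀ j k, ‖⟪b y j, b z k⟫‖ ^ 2 = 1 / d :=
  stmt_4_general d n hd b hb hbspan
end

section
/- Let P and Q be rank-one orthogonal projections on ℂ^d (i.e. self-adjoint idempotent d×d complex matrices of trace 1). Then (P − Q)³ = (1 − tr(PQ))·(P − Q). -/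
/-!
The range of a rank-one endomorphism `f` is a line, on which `f ∘ g` acts by a scalar `t`; as
`f ∘ g` maps everything into that line, `t` is its trace, so `f g f = tr(f g) f`. An idempotent of
trace one in characteristic zero has rank one, so `P Q P = tr(P Q) P` and `Q P Q = tr(P Q) Q`,
and these are the only non-trivial terms in the expansion of `(P - Q)³`.
-/

open Module

theorem sub_pow_three_of_isIdempotentElem {R : Type*} [Ring R] {p q : R}
    (hp : IsIdempotentElem p) (hq : IsIdempotentElem q) :
    (p - q) ^ 3 = p - p * q * p + q * p * q - q := by
  have expand : (p - q) ^ 3 = p * p * p - p * p * q - p * q * p + p * (q * q)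
      - q * (p * p) + q * p * q + q * q * p - q * q * q := by
    noncomm_ring
  rw [expand, hp.eq, hq.eq, hp.eq, hq.eq]
  abel

namespace LinearMap

variable {K V : Type*} [Field K] [AddCommGroup V] [Module K V] [FiniteDimensional K V]

theorem comp_comp_eq_trace_smul_of_finrank_range_eq_one (f g : V →ₗ[K] V)
    (hf : finrank K (range f) = 1) :
    f ∘ₗ g ∘ₗ f = trace K V (f ∘ₗ g) • f := by
  have hmem : ∀ x, (f ∘ₗ g) x ∈ range f := fun x ↦ mem_range_self f (g x)
  obtain ⟨t, ht, -⟩ :=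
    existsUnique_eq_smul_id_of_finrank_eq_one hf ((f ∘ₗ g).restrict fun x _ ↦ hmem x)
  have htrace : trace K V (f ∘ₗ g) = t := by
    rw [← trace_restrict_eq_of_forall_mem _ _ hmem, ht, map_smul, trace_id, hf]
    simp
  ext x
  have := congr($ht ⟨f x, mem_range_self f x⟩)
  simpa [htrace] using congr(Subtype.val $this)

theorem finrank_range_eq_one_of_isIdempotentElem [CharZero K] {f : V →ₗ[K] V}
    (hf : IsIdempotentElem f) (htr : trace K V f = 1) :
    finrank K (range f) = 1 := by
  have := (IsIdempotentElem.isProj_range f hf).trace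
  rw [htr] at this
  exact_mod_cast this.symm

end LinearMap

theorem Matrix.mul_mul_eq_trace_smul_of_isIdempotentElem {K n : Type*} [Field K] [CharZero K]
    [Fintype n] [DecidableEq n] {P : Matrix n n K} (hP : IsIdempotentElem P)
    (htr : P.trace = 1) (A : Matrix n n K) :
    P * A * P = (P * A).trace • P := by
  have hf : IsIdempotentElem (toLin' P) := by
    rw [IsIdempotentElem, Module.End.mul_eq_comp, ← toLin'_mul, hP.eq]
  have hrank := LinearMap.finrank_range_eq_one_of_isIdempotentElem hf (by simpa using htr)
  apply toLin'.injective
  simpa [toLin'_mul, LinearMap.comp_assoc, ← Matrix.trace_toLin'_eq (P * A)] using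
    LinearMap.comp_comp_eq_trace_smul_of_finrank_range_eq_one (toLin' P) (toLin' A) hrank

theorem stmt_7_general (d : ℕ) (P Q : Matrix (Fin d) (Fin d) ℂ)
    (hP2 : P * P = P) (hPtr : P.trace = 1)
    (hQ2 : Q * Q = Q) (hQtr : Q.trace = 1) :
    (P - Q) ^ 3 = (1 - (P * Q).trace) • (P - Q) := by
  have hPQP := Matrix.mul_mul_eq_trace_smul_of_isIdempotentElem hP2 hPtr Q
  have hQPQ := Matrix.mul_mul_eq_trace_smul_of_isIdempotentElem hQ2 hQtr P
  rw [Matrix.trace_mul_comm Q P] at hQPQ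
  rw [sub_pow_three_of_isIdempotentElem hP2 hQ2, hPQP, hQPQ, sub_smul, one_smul, smul_sub]
  abel

theorem stmt_7 (d : ℕ) (P Q : Matrix (Fin d) (Fin d) ℂ)
    (hP : P.IsHermitian) (hP2 : P * P = P) (hPtr : P.trace = 1)
    (hQ : Q.IsHermitian) (hQ2 : Q * Q = Q) (hQtr : Q.trace = 1) :
    (P - Q) ^ 3 = (1 - (P * Q).trace) • (P - Q) :=
  stmt_7_general d P Q hP2 hPtr hQ2 hQtr
end

section
/- Let d ≥ 2 and let P and Q be rank-one orthogonal projections on ℂ^d with tr(PQ) < 1, and set λ = √(1 − tr(PQ)). Then the self-adjoint matrix P − Q has eigenvalue λ with multiplicity one, eigenvalue −λ with multiplicity one, and eigenvalue 0 with multiplicity d − 2. -/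
/-!
An idempotent matrix of trace one has rank one, so `P X P = tr (P X) • P` for every `X`. With
`t = tr (P Q)` this gives `A³ = (1 - t) • A = λ² • A` for `A = P - Q`. As `tr A = 0` and
`tr A² = 2 λ² ≠ 0`, the matrices `A² ± λ A` are nonzero, and their columns are eigenvectors of `A`
for `±λ`. Both eigenspaces lie in the range of `A`, of dimension at most `rank P + rank Q = 2`, so
each is a line and `A` has rank two; rank–nullity then gives the kernel dimension `d - 2`.
-/

open Matrix Module

theorem sub_mul_sub_mul_sub_eq_smul {K R : Type*} [CommRing K] [Ring R] [Algebra K R] {P Q : R}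
    {t : K} (hP : P * P = P) (hQ : Q * Q = Q) (hPQP : P * Q * P = t • P)
    (hQPQ : Q * P * Q = t • Q) : (P - Q) * (P - Q) * (P - Q) = (1 - t) • (P - Q) := by
  have expand : (P - Q) * (P - Q) * (P - Q) =
      P * P * P - P * P * Q - P * Q * P + P * (Q * Q) - Q * (P * P) + Q * P * Q
        + Q * Q * P - Q * Q * Q := by noncomm_ring
  rw [expand, hP, hQ, hP, hQ, hPQP, hQPQ, sub_smul, one_smul, smul_sub]
  abel

namespace Matrix

variable {K m n : Type*} [Field K] [Fintype n]

theorem rank_eq_trace_of_mul_self [CharZero K] [DecidableEq n] {B : Matrix n n K}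
    (hB : B * B = B) : (B.rank : K) = B.trace := by
  have : IsIdempotentElem B.mulVecLin := by
    rw [IsIdempotentElem, Module.End.mul_eq_comp, ← mulVecLin_mul, hB]
  rw [← trace_toLin'_eq, toLin'_apply', (LinearMap.IsIdempotentElem.isProj_range _ this).trace,
    rank]

theorem exists_eq_vecMulVec_of_rank_eq_one {B : Matrix m n K} (h : B.rank = 1) :
    ∃ (a : m → K) (b : n → K), B = vecMulVec a b := by
  classical
  obtain ⟨a, -, ha⟩ := finrank_eq_one_iff'.mp h
  have hcol : ∀ j, ∃ c : K, c • a = B *ᵥ Pi.single j 1 := fun j => by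
    obtain ⟨c, hc⟩ := ha ⟨_, LinearMap.mem_range_self B.mulVecLin (Pi.single j 1)⟩
    exact ⟨c, congrArg Subtype.val hc⟩
  choose b hb using hcol
  refine ⟨a, b, ext fun i j => ?_⟩
  simpa [vecMulVec_apply, mul_comm] using (congrFun (hb j) i).symm

theorem mul_mul_eq_trace_mul_smul_of_rank_eq_one {B : Matrix n n K} (h : B.rank = 1)
    (X : Matrix n n K) : B * X * B = (B * X).trace • B := by
  obtain ⟨a, b, rfl⟩ := exists_eq_vecMulVec_of_rank_eq_one h
  rw [vecMulVec_mul, vecMulVec_mul_vecMulVec, trace_vecMulVec, vecMulVec_smul, dotProduct_comm]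

theorem sub_mul_sub_mul_sub_eq_of_rank_eq_one [DecidableEq n] {P Q : Matrix n n K}
    (hP : P * P = P) (hQ : Q * Q = Q) (hPr : P.rank = 1) (hQr : Q.rank = 1) :
    (P - Q) * (P - Q) * (P - Q) = (1 - (P * Q).trace) • (P - Q) := by
  have hQPQ : Q * P * Q = (P * Q).trace • Q := by
    rw [mul_mul_eq_trace_mul_smul_of_rank_eq_one hQr P, trace_mul_comm]
  exact sub_mul_sub_mul_sub_eq_smul hP hQ (mul_mul_eq_trace_mul_smul_of_rank_eq_one hPr Q) hQPQ

theorem trace_sub_mul_sub_of_mul_self {P Q : Matrix n n K} (hP : P * P = P) (hQ : Q * Q = Q) :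
    ((P - Q) * (P - Q)).trace = P.trace + Q.trace - 2 * (P * Q).trace := by
  rw [sub_mul, mul_sub, mul_sub, hP, hQ, trace_sub, trace_sub, trace_sub, trace_mul_comm Q P]
  ring

theorem rank_sub_le (A B : Matrix m n K) : (A - B).rank ≤ A.rank + B.rank := by
  have hrange : LinearMap.range (A - B).mulVecLin ≤
      LinearMap.range A.mulVecLin ⊔ LinearMap.range B.mulVecLin := by
    rintro _ ⟨x, rfl⟩
    rw [mulVecLin_apply, sub_mulVec]
    exact Submodule.sub_mem_sup (LinearMap.mem_range_self _ x) (LinearMap.mem_range_self _ x)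
  exact (Submodule.finrank_mono hrange).trans (Submodule.finrank_add_le_finrank_add_finrank _ _)

theorem hasEigenvalue_of_mul_mul_self_eq_sq_smul [DecidableEq n] {A : Matrix n n K} {σ : K}
    (hA : A * A * A = σ ^ 2 • A) (htr : A.trace = 0) (htr2 : (A * A).trace ≠ 0) :
    Module.End.HasEigenvalue A.mulVecLin σ := by
  set M := A * A + σ • A
  have hAM : A * M = σ • M :=
    calc A * M = A * A * A + σ • (A * A) := by rw [mul_add, mul_smul_comm, ← mul_assoc]
      _ = σ • M := by rw [hA, smul_add, smul_smul, sq σ, add_comm]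
  have hM : M ≠ 0 := fun h => htr2 <| by
    simpa [M, htr] using congrArg trace h
  obtain ⟨y, hy⟩ : ∃ y, M *ᵥ y ≠ 0 := by
    by_contra! h
    exact hM (ext_of_mulVec_single fun j => by rw [h, zero_mulVec])
  refine Module.End.hasEigenvalue_of_hasEigenvector ⟨?_, hy⟩
  rw [Module.End.mem_eigenspace_iff, mulVecLin_apply, mulVec_mulVec, hAM, smul_mulVec]

end Matrix

namespace Module.End
variable {K V : Type*} [Field K] [AddCommGroup V] [Module K V]

theorem eigenspace_le_range {f : End K V} {μ : K} (hμ : μ ≠ 0) :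
    f.eigenspace μ ≤ LinearMap.range f := fun x hx =>
  ⟨μ⁻¹ • x, by rw [map_smul, mem_eigenspace_iff.mp hx, inv_smul_smul₀ hμ]⟩

variable [FiniteDimensional K V]

theorem finrank_eigenspace_add_finrank_eigenspace_le_finrank_range {f : End K V} {σ τ : K}
    (hστ : σ ≠ τ) (hσ : σ ≠ 0) (hτ : τ ≠ 0) :
    finrank K (f.eigenspace σ) + finrank K (f.eigenspace τ) ≤ finrank K (LinearMap.range f) := by
  have hdisj : Disjoint (f.eigenspace σ) (f.eigenspace τ) :=
    f.eigenspaces_iSupIndep.pairwiseDisjoint hστ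
  rw [← Submodule.finrank_sup_add_finrank_inf_eq, hdisj.eq_bot, finrank_bot, add_zero]
  exact Submodule.finrank_mono (sup_le (eigenspace_le_range hσ) (eigenspace_le_range hτ))

theorem finrank_eigenspace_eq_one_of_finrank_range_le_two {f : End K V} {σ τ : K}
    (hστ : σ ≠ τ) (hσ0 : σ ≠ 0) (hτ0 : τ ≠ 0) (hσ : f.HasEigenvalue σ) (hτ : f.HasEigenvalue τ)
    (hf : finrank K (LinearMap.range f) ≤ 2) :
    finrank K (f.eigenspace σ) = 1 ∧ finrank K (f.eigenspace τ) = 1 ∧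
      finrank K (f.eigenspace 0) = finrank K V - 2 := by
  have hsum := finrank_eigenspace_add_finrank_eigenspace_le_finrank_range (f := f) hστ hσ0 hτ0
  have hσ1 := Submodule.one_le_finrank_iff.mpr (hasEigenvalue_iff.mp hσ)
  have hτ1 := Submodule.one_le_finrank_iff.mpr (hasEigenvalue_iff.mp hτ)
  have hrank := LinearMap.finrank_range_add_finrank_ker f
  rw [eigenspace_zero]
  omega

end Module.End

open scoped ComplexOrder
theorem stmt_9_general (d : ℕ) (P Q : Matrix (Fin d) (Fin d) ℂ)
    (hP2 : P * P = P) (hPtr : P.trace = 1)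
    (hQ2 : Q * Q = Q) (hQtr : Q.trace = 1)
    (hPQ : (P * Q).trace < 1)
    (lam : ℝ) (hlam : lam = Real.sqrt (1 - ((P * Q).trace.re))) :
    Module.finrank ℂ (Module.End.eigenspace (P - Q).mulVecLin (lam : ℂ)) = 1 ∧
    Module.finrank ℂ (Module.End.eigenspace (P - Q).mulVecLin (-lam : ℂ)) = 1 ∧
    Module.finrank ℂ (Module.End.eigenspace (P - Q).mulVecLin (0 : ℂ)) = d - 2 := by
  have hPr : P.rank = 1 := by exact_mod_cast (rank_eq_trace_of_mul_self hP2).trans hPtr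
  have hQr : Q.rank = 1 := by exact_mod_cast (rank_eq_trace_of_mul_self hQ2).trans hQtr
  set t := (P * Q).trace
  obtain ⟨ht1, ht⟩ : t.re < 1 ∧ t.im = 0 := Complex.lt_def.mp hPQ
  have hlam0 : (lam : ℂ) ≠ 0 := by
    rw [hlam, Complex.ofReal_ne_zero, Real.sqrt_ne_zero']
    linarith
  have hlam2 : (lam : ℂ) ^ 2 = 1 - t := by
    rw [← Complex.ofReal_pow, hlam, Real.sq_sqrt (by linarith)]
    exact Complex.ext (by simp) (by simp [ht])
  have hA3 : (P - Q) * (P - Q) * (P - Q) = (lam : ℂ) ^ 2 • (P - Q) := by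
    rw [hlam2]
    exact sub_mul_sub_mul_sub_eq_of_rank_eq_one hP2 hQ2 hPr hQr
  have htrA : (P - Q).trace = 0 := by rw [trace_sub, hPtr, hQtr, sub_self]
  have htrA2 : ((P - Q) * (P - Q)).trace ≠ 0 := by
    rw [trace_sub_mul_sub_of_mul_self hP2 hQ2, hPtr, hQtr,
      show (1 : ℂ) + 1 - 2 * t = 2 * (lam : ℂ) ^ 2 by rw [hlam2]; ring]
    exact mul_ne_zero two_ne_zero (pow_ne_zero 2 hlam0)
  have hrank : finrank ℂ (LinearMap.range (P - Q).mulVecLin) ≤ 2 :=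
    (rank_sub_le P Q).trans (by rw [hPr, hQr])
  have key := Module.End.finrank_eigenspace_eq_one_of_finrank_range_le_two
    (mt self_eq_neg.mp hlam0) hlam0 (neg_ne_zero.mpr hlam0)
    (hasEigenvalue_of_mul_mul_self_eq_sq_smul hA3 htrA htrA2)
    (hasEigenvalue_of_mul_mul_self_eq_sq_smul (by rwa [neg_sq]) htrA htrA2) hrank
  simpa only [Module.finrank_fin_fun, Complex.ofReal_neg] using key

theorem stmt_9 (d : ℕ) (hd : 2 ≤ d) (P Q : Matrix (Fin d) (Fin d) ℂ)
    (hP : P.IsHermitian) (hP2 : P * P = P) (hPtr : P.trace = 1)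
    (hQ : Q.IsHermitian) (hQ2 : Q * Q = Q) (hQtr : Q.trace = 1)
    (hPQ : (P * Q).trace < 1)
    (lam : ℝ) (hlam : lam = Real.sqrt (1 - ((P * Q).trace.re))) :
    Module.finrank ℂ (Module.End.eigenspace (P - Q).mulVecLin (lam : ℂ)) = 1 ∧
    Module.finrank ℂ (Module.End.eigenspace (P - Q).mulVecLin (-lam : ℂ)) = 1 ∧
    Module.finrank ℂ (Module.End.eigenspace (P - Q).mulVecLin (0 : ℂ)) = d - 2 :=
  stmt_9_general d P Q hP2 hPtr hQ2 hQtr hPQ lam hlam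
end

section
/- Let P and Q be rank-one orthogonal projections on ℂ^d, and let A₁, A₂ be positive semidefinite d×d complex matrices with A₁ + A₂ ≤ 𝟙 (in the Loewner order). Then tr[(A₁ − A₂)(P − Q)] ≤ 2·√(1 − tr(PQ)). -/
/-!
Put `R = P - Q` and `t = tr(PQ)`, which is real. A rank-one projection compresses every matrix to
a multiple of itself, `P X P = tr(X P) P`, so `R³ = (1 - t) R` and `tr R² = 2 (1 - t)`. For
`s = √(1 - t) > 0` the matrices `E± = (R² ± s R) / (2 s²)` are orthogonal projections with
`R = s (E₊ - E₋)` and `E₊ + E₋ = R² / s²`. Since `-𝟙 ≤ A₁ - A₂ ≤ 𝟙`, pairing `A₁ - A₂` with a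
projection `E` gives at most `tr E`, hence `tr((A₁ - A₂) R) ≤ s tr(E₊ + E₋) = 2 s`.
If `s = 0` then `tr R² = 0`, so `R = 0`.
-/

open scoped ComplexOrder
open Matrix Finset

theorem IsIdempotentElem.sub_mul_self_mul_sub {A : Type*} [Ring A] {p q : A}
    (hp : IsIdempotentElem p) (hq : IsIdempotentElem q) :
    (p - q) * (p - q) * (p - q) = p - q - p * q * p + q * p * q := by
  simp only [sub_mul, mul_sub, mul_assoc, hp.eq, hq.eq]
  abel

theorem IsSelfAdjoint.isStarProjection_of_mul_self_mul_self {A : Type*} [Ring A] [StarRing A]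
    [Algebra ℝ A] [StarModule ℝ A] {r : A} (hr : IsSelfAdjoint r) {s : ℝ} (hs : s ≠ 0)
    (h : r * r * r = s ^ 2 • r) :
    IsStarProjection ((2 * s ^ 2)⁻¹ • (r * r + s • r)) := by
  have hsq : (r * r + s • r) * (r * r + s • r) = (2 * s ^ 2) • (r * r + s • r) := by
    simp only [add_mul, mul_add, smul_mul_assoc, mul_smul_comm, smul_smul, ← mul_assoc, h]
    module
  refine ⟨?_, ?_⟩
  · rw [IsIdempotentElem, smul_mul_smul_comm, hsq, smul_smul,
      inv_mul_cancel_right₀ (by positivity)]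
  · simp [IsSelfAdjoint, star_smul, hr.star_eq]

theorem Pi.exists_eq_single_of_sum_eq_one {ι : Type*} [Fintype ι] [DecidableEq ι] {e : ι → ℝ}
    (h01 : ∀ i, e i = 0 ∨ e i = 1) (hsum : ∑ i, e i = 1) : ∃ i, e = Pi.single i 1 := by
  obtain ⟨i, hi⟩ : ∃ i, e i = 1 := by
    by_contra! h
    simp [fun i => (h01 i).resolve_right (h i)] at hsum
  have hrest : ∑ j ∈ univ.erase i, e j = 0 := by
    linarith [add_sum_erase univ e (mem_univ i)]
  have hnonneg : ∀ j ∈ univ.erase i, 0 ≤ e j := fun j _ => by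
    rcases h01 j with h | h <;> simp [h]
  refine ⟨i, funext fun j => ?_⟩
  rcases eq_or_ne j i with rfl | hji
  · simp [hi]
  · simpa [hji] using (sum_eq_zero_iff_of_nonneg hnonneg).mp hrest j (by simp [hji])

section Matrix

variable {n 𝕜 : Type*} [Fintype n] [RCLike 𝕜]

theorem Matrix.PosSemidef.trace_mul_nonneg_of_isStarProjection {A E : Matrix n n 𝕜}
    (hA : A.PosSemidef) (hE : IsStarProjection E) : 0 ≤ (A * E).trace := by
  have hEH : Eᴴ = E := hE.isSelfAdjoint
  calc 0 ≤ (Eᴴ * A * E).trace := (hA.conjTranspose_mul_mul_same E).trace_nonneg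
    _ = (A * E).trace := by rw [trace_mul_cycle, hEH, hE.isIdempotentElem.eq, trace_mul_comm]

variable [DecidableEq n]

theorem Matrix.re_trace_mul_le_of_isStarProjection {X E : Matrix n n 𝕜}
    (hX : (1 - X).PosSemidef) (hE : IsStarProjection E) :
    RCLike.re (X * E).trace ≤ RCLike.re E.trace := by
  have h := RCLike.nonneg_iff.mp (hX.trace_mul_nonneg_of_isStarProjection hE) |>.1
  rw [sub_mul, one_mul, trace_sub, map_sub] at h
  linarith

theorem Matrix.IsHermitian.re_trace_mul_le_of_mul_self_mul_self {X R : Matrix n n 𝕜}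
    (hR : R.IsHermitian) {s : ℝ} (hs : 0 < s) (h : R * R * R = s ^ 2 • R)
    (hX₁ : (1 - X).PosSemidef) (hX₂ : (1 + X).PosSemidef) :
    RCLike.re (X * R).trace ≤ RCLike.re (R * R).trace / s := by
  set E₁ := (2 * s ^ 2)⁻¹ • (R * R + s • R)
  set E₂ := (2 * s ^ 2)⁻¹ • ((-R) * (-R) + s • (-R))
  have hE₁ : IsStarProjection E₁ := IsSelfAdjoint.isStarProjection_of_mul_self_mul_self hR hs.ne' h
  have hE₂ : IsStarProjection E₂ :=
    IsSelfAdjoint.isStarProjection_of_mul_self_mul_self hR.neg hs.ne' (by simp [h])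
  have hR_eq : R = s • (E₁ - E₂) := by
    simp only [E₁, E₂, neg_mul_neg, smul_neg]
    match_scalars <;> field_simp <;> norm_num
  have hRR : R * R = s ^ 2 • (E₁ + E₂) := by
    simp only [E₁, E₂, neg_mul_neg, smul_neg]
    match_scalars <;> field_simp <;> norm_num
  clear_value E₁ E₂
  have hX₂' : (1 - -X).PosSemidef := by rwa [sub_neg_eq_add]
  calc RCLike.re (X * R).trace
      = s * (RCLike.re (X * E₁).trace + RCLike.re (-X * E₂).trace) := by
        rw [hR_eq]
        simp only [mul_smul_comm, mul_sub, trace_smul, trace_sub, RCLike.smul_re, map_sub,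
          neg_mul, trace_neg, map_neg]
        ring
    _ ≤ s * (RCLike.re E₁.trace + RCLike.re E₂.trace) := by
        gcongr s * (?_ + ?_)
        · exact re_trace_mul_le_of_isStarProjection hX₁ hE₁
        · exact re_trace_mul_le_of_isStarProjection hX₂' hE₂
    _ = RCLike.re (R * R).trace / s := by
        rw [hRR, trace_smul, trace_add, RCLike.smul_re, map_add]
        field_simp

theorem Matrix.IsHermitian.exists_eigenvalues_eq_single {P : Matrix n n 𝕜} (hH : P.IsHermitian)
    (hP : IsIdempotentElem P) (htr : P.trace = 1) : ∃ i, hH.eigenvalues = Pi.single i 1 := by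
  refine Pi.exists_eq_single_of_sum_eq_one (fun j => ?_) ?_
  · simpa using IsIdempotentElem.spectrum_subset ℝ hP (hH.eigenvalues_mem_spectrum_real j)
  · exact_mod_cast (htr ▸ hH.trace_eq_sum_eigenvalues).symm

theorem IsStarProjection.exists_mul_mul_self_eq_smul {P : Matrix n n 𝕜}
    (hP : IsStarProjection P) (htr : P.trace = 1) (X : Matrix n n 𝕜) :
    ∃ c : 𝕜, P * X * P = c • P := by
  have hH : P.IsHermitian := hP.isSelfAdjoint.isHermitian
  obtain ⟨i, hi⟩ := hH.exists_eigenvalues_eq_single hP.isIdempotentElem htr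
  set φ := Unitary.conjStarAlgAut 𝕜 (Matrix n n 𝕜) hH.eigenvectorUnitary
  have hD : diagonal (RCLike.ofReal ∘ hH.eigenvalues) = single i i (1 : 𝕜) := by
    simp [hi, ← diagonal_single, Pi.single_apply]
  have hPφ : P = φ (single i i 1) := hD ▸ hH.spectral_theorem
  refine ⟨φ.symm X i i, ?_⟩
  rw [hPφ, ← φ.apply_symm_apply X, ← map_mul, ← map_mul, single_mul_mul_single, ← map_smul,
    smul_single]
  simp

theorem IsStarProjection.mul_mul_self_eq_trace_mul_smul {P : Matrix n n 𝕜}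
    (hP : IsStarProjection P) (htr : P.trace = 1) (X : Matrix n n 𝕜) :
    P * X * P = (X * P).trace • P := by
  obtain ⟨c, hc⟩ := hP.exists_mul_mul_self_eq_smul htr X
  have hc' : (X * P).trace = c :=
    calc (X * P).trace = (P * X * P).trace := by
          rw [trace_mul_cycle, hP.isIdempotentElem.eq, trace_mul_comm]
      _ = c := by rw [hc, trace_smul, htr, smul_eq_mul, mul_one]
  rw [hc', hc]

end Matrix

theorem stmt_11 (d : ℕ) (P Q : Matrix (Fin d) (Fin d) ℂ)
    (hP : P.IsHermitian) (hP2 : P * P = P) (hPtr : P.trace = 1)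
    (hQ : Q.IsHermitian) (hQ2 : Q * Q = Q) (hQtr : Q.trace = 1)
    (A₁ A₂ : Matrix (Fin d) (Fin d) ℂ)
    (hA₁ : A₁.PosSemidef) (hA₂ : A₂.PosSemidef)
    (hsum : ((1 : Matrix (Fin d) (Fin d) ℂ) - (A₁ + A₂)).PosSemidef) :
    ((A₁ - A₂) * (P - Q)).trace.re ≤ 2 * Real.sqrt (1 - (P * Q).trace.re) := by
  set t := (P * Q).trace.re
  have hτ : (P * Q).trace = t := by
    refine (Complex.conj_eq_iff_re.mp ?_).symm
    rw [← Complex.star_def, ← trace_conjTranspose, conjTranspose_mul, hP, hQ, trace_mul_comm]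
  have hcube : (P - Q) * (P - Q) * (P - Q) = (1 - t) • (P - Q) := by
    rw [IsIdempotentElem.sub_mul_self_mul_sub hP2 hQ2,
      (IsStarProjection.mk hP2 hP).mul_mul_self_eq_trace_mul_smul hPtr,
      (IsStarProjection.mk hQ2 hQ).mul_mul_self_eq_trace_mul_smul hQtr, trace_mul_comm Q, hτ,
      sub_smul, one_smul, smul_sub, ← Complex.coe_smul, ← Complex.coe_smul]
    abel
  have hsq : ((P - Q) * (P - Q)).trace = (2 * (1 - t) : ℝ) := by
    simp only [sub_mul, mul_sub, hP2, hQ2, trace_sub, hPtr, hQtr, trace_mul_comm Q P, hτ]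
    push_cast
    ring
  have hR : (P - Q).IsHermitian := hP.sub hQ
  have ht : 0 ≤ 1 - t := by
    have h := (posSemidef_conjTranspose_mul_self (P - Q)).trace_nonneg
    rw [hR.eq, hsq, Complex.zero_le_real] at h
    linarith
  have hX₁ : (1 - (A₁ - A₂)).PosSemidef := by
    convert hsum.add (hA₂.add hA₂) using 1
    abel
  have hX₂ : (1 + (A₁ - A₂)).PosSemidef := by
    convert hsum.add (hA₁.add hA₁) using 1
    abel
  rcases (Real.sqrt_nonneg (1 - t)).eq_or_lt with hs | hs
  · have hR0 : P - Q = 0 := by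
      rw [← trace_conjTranspose_mul_self_eq_zero_iff, hR.eq, hsq,
        le_antisymm (Real.sqrt_eq_zero'.mp hs.symm) ht]
      simp
    simp [hR0, ← hs]
  · calc ((A₁ - A₂) * (P - Q)).trace.re
        ≤ RCLike.re ((P - Q) * (P - Q)).trace / √(1 - t) :=
          hR.re_trace_mul_le_of_mul_self_mul_self hs (by rwa [Real.sq_sqrt ht]) hX₁ hX₂
      _ = 2 * √(1 - t) := by
          rw [hsq, RCLike.re_to_complex, Complex.ofReal_re]
          nth_rw 1 [← Real.sq_sqrt ht]
          field_simp
end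

section
/- Let d ≥ 2, n ≥ 2, and suppose there exist n pairwise mutually unbiased orthonormal bases {b^y_j}_{j=1}^{d} (y = 1,…,n) of ℂ^d. Then there exist a unit vector ψ ∈ ℂ^d ⊗ ℂ^d, and for every pair (y,z) with 1 ≤ y < z ≤ n and every j,k ∈ {1,…,d} a POVM {A^{(y,z)jk}_1, A^{(y,z)jk}_2, A^{(y,z)jk}_⊥} on ℂ^d (positive semidefinite matrices summing to the identity), such that, with B^y_j = |b^y_j⟩⟨b^y_j|, the Bell value W_{d,n} = ∑_{1 ≤ y < z ≤ n} ∑_{j,k=1}^{d} [ ⟨ψ, (A^{(y,z)jk}_1 − A^{(y,z)jk}_2) ⊗ (B^y_j − B^z_k) ψ⟩ − (1/2)·√((d−1)/d)·⟨ψ, (A^{(y,z)jk}_1 + A^{(y,z)jk}_2) ⊗ 𝟙 ψ⟩ ] equals (n(n−1)/2)·√(d(d−1)). -/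
/-! For unit vectors `v`, `w`, the projections `P = |v⟩⟨v|`, `Q = |w⟩⟨w|` satisfy
`P Q P = μ P` and `Q P Q = μ Q` with `μ = |⟨v, w⟩|²`, hence `D = P - Q` satisfies `D³ = (1 - μ) D`
and `tr D² = 2 (1 - μ)`. For unbiased vectors `1 - μ = λ²` with `λ = √((d - 1)/d)`, so the spectrum
of `D` lies in `{λ, -λ, 0}` and its spectral projections are the polynomials `(D² ± λ D)/(2λ²)` and
`1 - D²/λ²`. For the maximally entangled `ψ` one has `⟨ψ, (X ⊗ Y) ψ⟩ = tr (Xᵀ Y) / d`, so with the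
transposed projections each of the `d²` terms of a pair `y < z` equals
`(tr D² / λ - (λ/2) · tr D² / λ²) / d = λ / d`, and the `n(n - 1)/2` pairs give
`n(n - 1)/2 · d λ = n(n - 1)/2 · √(d(d - 1))`. -/

open Finset Matrix
open scoped Kronecker ComplexInnerProductSpace ComplexOrder

/-- The rank-one projection `|v⟩⟨v|` as a matrix. -/
def outerProj {d : ℕ} (v : EuclideanSpace ℂ (Fin d)) : Matrix (Fin d) (Fin d) ℂ :=
  Matrix.of fun i j => v i * (starRingEnd ℂ) (v j)

lemma sub_pow_three_of_mul_mul_eq_smul {R S : Type*} [Ring R] [CommRing S] [Algebra S R]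
    {P Q : R} {μ : S} (hP : IsIdempotentElem P) (hQ : IsIdempotentElem Q)
    (hPQP : P * Q * P = μ • P) (hQPQ : Q * P * Q = μ • Q) :
    (P - Q) ^ 3 = (1 - μ) • (P - Q) := by
  have hDP : (P - Q) ^ 2 * P = (1 - μ) • P := calc
    _ = P * P * P - P * Q * P - Q * (P * P) + Q * Q * P := by noncomm_ring
    _ = (1 - μ) • P := by rw [hP.eq, hP.eq, hQ.eq, hPQP]; module
  have hDQ : (P - Q) ^ 2 * Q = (1 - μ) • Q := calc
    _ = P * P * Q - P * (Q * Q) - Q * P * Q + Q * Q * Q := by noncomm_ring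
    _ = (1 - μ) • Q := by rw [hP.eq, hQ.eq, hQ.eq, hQPQ]; module
  rw [pow_succ, mul_sub, hDP, hDQ, smul_sub]

lemma Matrix.trace_sub_sq_of_mul_mul_eq_smul {m α S : Type*} [Fintype m] [DecidableEq m]
    [CommRing α] [CommRing S] [Algebra S α] {P Q : Matrix m m α} {μ : S}
    (hP : IsIdempotentElem P) (hQ : IsIdempotentElem Q)
    (hPQP : P * Q * P = μ • P) (hQPQ : Q * P * Q = μ • Q) :
    trace ((P - Q) ^ 2) = (1 - μ) • (trace P + trace Q) := by
  have hPQ : trace (P * Q) = μ • trace P := calc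
    _ = trace (P * P * Q) := by rw [hP.eq]
    _ = μ • trace P := by rw [mul_assoc, trace_mul_comm, hPQP, trace_smul]
  have hQP : trace (Q * P) = μ • trace Q := calc
    _ = trace (Q * Q * P) := by rw [hQ.eq]
    _ = μ • trace Q := by rw [mul_assoc, trace_mul_comm, hQPQ, trace_smul]
  rw [sq, sub_mul, mul_sub, mul_sub, hP.eq, hQ.eq, trace_sub, trace_sub, trace_sub, hPQ, hQP]
  module

lemma IsStarProjection.posSemidef {m R : Type*} [Fintype m] [Ring R] [PartialOrder R]
    [StarRing R] [StarOrderedRing R] {M : Matrix m m R} (hM : IsStarProjection M) :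
    M.PosSemidef := by
  simpa only [← star_eq_conjTranspose, hM.isSelfAdjoint.star_eq, hM.isIdempotentElem.eq]
    using posSemidef_conjTranspose_mul_self M

section SpectralProjection

variable {R : Type*} [Ring R] [Algebra ℝ R] {D : R} {l : ℝ}

/-- The spectral projection of `D` onto the eigenvalue `l` when `D³ = l² D`. -/
noncomputable def eigenProj (D : R) (l : ℝ) : R := (2 * l ^ 2)⁻¹ • D ^ 2 + (2 * l)⁻¹ • D

lemma sq_mul_sq_of_pow_three_eq_smul (hD3 : D ^ 3 = l ^ 2 • D) :
    D ^ 2 * D ^ 2 = l ^ 2 • D ^ 2 := by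
  rw [← pow_add, pow_succ, hD3, smul_mul_assoc, ← sq]

lemma eigenProj_sub_eigenProj_neg : eigenProj D l - eigenProj D (-l) = l⁻¹ • D := by
  unfold eigenProj
  match_scalars <;> field_simp <;> ring

lemma eigenProj_add_eigenProj_neg (hl : l ≠ 0) :
    eigenProj D l + eigenProj D (-l) = (l ^ 2)⁻¹ • D ^ 2 := by
  unfold eigenProj
  match_scalars <;> field_simp <;> ring

variable [StarRing R] [StarModule ℝ R]

lemma isStarProjection_eigenProj (hD : IsSelfAdjoint D) (hl : l ≠ 0) (hD3 : D ^ 3 = l ^ 2 • D) :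
    IsStarProjection (eigenProj D l) := by
  have h21 : D ^ 2 * D = l ^ 2 • D := by rw [← pow_succ, hD3]
  have h12 : D * D ^ 2 = l ^ 2 • D := by rw [← pow_succ', hD3]
  refine ⟨?_, ?_⟩
  · unfold IsIdempotentElem eigenProj
    simp only [add_mul, mul_add, smul_mul_smul, sq_mul_sq_of_pow_three_eq_smul hD3, h21, h12,
      ← sq D, smul_smul]
    match_scalars <;> field_simp <;> ring
  · simp [eigenProj, IsSelfAdjoint, star_smul, hD.star_eq]

lemma isStarProjection_inv_sq_smul_sq (hD : IsSelfAdjoint D) (hl : l ≠ 0)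
    (hD3 : D ^ 3 = l ^ 2 • D) : IsStarProjection ((l ^ 2)⁻¹ • D ^ 2) := by
  refine ⟨?_, ?_⟩
  · rw [IsIdempotentElem, smul_mul_smul, sq_mul_sq_of_pow_three_eq_smul hD3, smul_smul]
    congr 1
    field_simp
  · simp [IsSelfAdjoint, star_smul, hD.star_eq]

end SpectralProjection

section RankOne

variable {d : ℕ} {v w : EuclideanSpace ℂ (Fin d)}

lemma outerProj_eq_vecMulVec (v : EuclideanSpace ℂ (Fin d)) :
    outerProj v = vecMulVec v (star v) := rfl

lemma star_dotProduct_eq_inner (v w : EuclideanSpace ℂ (Fin d)) : star ⇑v ⬝ᵥ ⇑w = ⟪v, w⟫ := by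
  rw [EuclideanSpace.inner_eq_star_dotProduct, dotProduct_comm]

lemma isSelfAdjoint_outerProj (v : EuclideanSpace ℂ (Fin d)) : IsSelfAdjoint (outerProj v) := by
  rw [IsSelfAdjoint, outerProj_eq_vecMulVec, star_eq_conjTranspose, conjTranspose_vecMulVec,
    star_star]

lemma isStarProjection_outerProj (hv : ‖v‖ = 1) : IsStarProjection (outerProj v) := by
  refine ⟨?_, isSelfAdjoint_outerProj v⟩
  rw [IsIdempotentElem, outerProj_eq_vecMulVec, vecMulVec_mul_vecMulVec,
    star_dotProduct_eq_inner, inner_self_eq_norm_sq_to_K, hv]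
  simp

lemma outerProj_mul_outerProj_mul_outerProj (v w : EuclideanSpace ℂ (Fin d)) :
    outerProj v * outerProj w * outerProj v = (‖⟪v, w⟫‖ ^ 2 : ℝ) • outerProj v := by
  simp only [outerProj_eq_vecMulVec, vecMulVec_mul_vecMulVec, smul_mul_assoc,
    star_dotProduct_eq_inner, vecMulVec_smul, smul_smul]
  rw [← inner_conj_symm w v, RCLike.mul_conj, RCLike.real_smul_eq_coe_smul (K := ℂ)]
  norm_cast

lemma trace_outerProj (v : EuclideanSpace ℂ (Fin d)) : trace (outerProj v) = (‖v‖ ^ 2 : ℝ) := by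
  rw [outerProj_eq_vecMulVec, trace_vecMulVec, dotProduct_comm, star_dotProduct_eq_inner,
    inner_self_eq_norm_sq_to_K]
  norm_cast

lemma outerProj_sub_outerProj_pow_three (hv : ‖v‖ = 1) (hw : ‖w‖ = 1) :
    (outerProj v - outerProj w) ^ 3 = (1 - ‖⟪v, w⟫‖ ^ 2) • (outerProj v - outerProj w) := by
  refine sub_pow_three_of_mul_mul_eq_smul (isStarProjection_outerProj hv).isIdempotentElem
    (isStarProjection_outerProj hw).isIdempotentElem
    (outerProj_mul_outerProj_mul_outerProj v w) ?_
  rw [outerProj_mul_outerProj_mul_outerProj, norm_inner_symm]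

lemma trace_outerProj_sub_outerProj_sq (hv : ‖v‖ = 1) (hw : ‖w‖ = 1) :
    trace ((outerProj v - outerProj w) ^ 2) = ((2 * (1 - ‖⟪v, w⟫‖ ^ 2) : ℝ) : ℂ) := by
  rw [trace_sub_sq_of_mul_mul_eq_smul (isStarProjection_outerProj hv).isIdempotentElem
    (isStarProjection_outerProj hw).isIdempotentElem (outerProj_mul_outerProj_mul_outerProj v w)
    (by rw [outerProj_mul_outerProj_mul_outerProj, norm_inner_symm]),
    trace_outerProj, trace_outerProj, hv, hw, Complex.real_smul]
  push_cast; ring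

end RankOne

section MaxEntangled

variable (ι : Type*) [Fintype ι] [DecidableEq ι]

noncomputable def maxEntangled : EuclideanSpace ℂ (ι × ι) :=
  WithLp.toLp 2 fun p => if p.1 = p.2 then (Real.sqrt (Fintype.card ι) : ℂ)⁻¹ else 0

variable {ι}

lemma inner_maxEntangled_toEuclideanLin_kronecker (X Y : Matrix ι ι ℂ) :
    ⟪maxEntangled ι, toEuclideanLin (X ⊗ₖ Y) (maxEntangled ι)⟫
      = (Fintype.card ι : ℂ)⁻¹ * trace (Xᵀ * Y) := by
  have hc : (Real.sqrt (Fintype.card ι) : ℂ)⁻¹ * star (Real.sqrt (Fintype.card ι) : ℂ)⁻¹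
      = (Fintype.card ι : ℂ)⁻¹ := by
    rw [star_inv₀, Complex.star_def, Complex.conj_ofReal, ← mul_inv, ← Complex.ofReal_mul,
      Real.mul_self_sqrt (Nat.cast_nonneg _), Complex.ofReal_natCast]
  simp only [maxEntangled, toLpLin_apply, EuclideanSpace.inner_toLp_toLp, dotProduct,
    mulVec, Fintype.sum_prod_type, kroneckerMap_apply, Pi.star_apply, apply_ite star, star_zero,
    mul_ite, mul_zero, Finset.sum_ite_eq, Finset.mem_univ, if_true, trace, Matrix.diag, mul_apply,
    transpose_apply, Finset.mul_sum, Finset.sum_mul]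
  conv_rhs => rw [Finset.sum_comm]
  refine Finset.sum_congr rfl fun i _ => Finset.sum_congr rfl fun j _ => ?_
  linear_combination (X i j * Y i j) * hc

lemma norm_maxEntangled [Nonempty ι] : ‖maxEntangled ι‖ = 1 := by
  have h := inner_maxEntangled_toEuclideanLin_kronecker (ι := ι) 1 1
  rw [one_kronecker_one, transpose_one, one_mul, trace_one, toLpLin_one,
    LinearMap.id_apply, inv_mul_cancel₀ (Nat.cast_ne_zero.mpr Fintype.card_ne_zero),
    inner_self_eq_norm_sq_to_K, ← RCLike.ofReal_pow, ← RCLike.ofReal_one,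
    RCLike.ofReal_inj] at h
  exact (pow_eq_one_iff_of_nonneg (norm_nonneg _) two_ne_zero).mp h

end MaxEntangled

section SpectralPOVM

variable {ι : Type*} [Fintype ι] [DecidableEq ι] {D : Matrix ι ι ℂ} {l : ℝ}

noncomputable def spectralPOVM (D : Matrix ι ι ℂ) (l : ℝ) : Fin 3 → Matrix ι ι ℂ :=
  ![(eigenProj D l)ᵀ, (eigenProj D (-l))ᵀ, (1 - (l ^ 2)⁻¹ • D ^ 2)ᵀ]

lemma posSemidef_spectralPOVM (hD : IsSelfAdjoint D) (hl : l ≠ 0) (hD3 : D ^ 3 = l ^ 2 • D)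
    (a : Fin 3) : (spectralPOVM D l a).PosSemidef := by
  fin_cases a <;> refine posSemidef_transpose_iff.mpr (IsStarProjection.posSemidef ?_)
  · exact isStarProjection_eigenProj hD hl hD3
  · exact isStarProjection_eigenProj hD (neg_ne_zero.mpr hl) (by rwa [neg_sq])
  · exact (isStarProjection_inv_sq_smul_sq hD hl hD3).one_sub

lemma sum_spectralPOVM (hl : l ≠ 0) : ∑ a, spectralPOVM D l a = 1 := by
  simp only [spectralPOVM, Fin.sum_univ_three, cons_val_zero, cons_val_one, cons_val_two,
    tail_cons, head_cons]
  rw [← transpose_add, ← transpose_add, eigenProj_add_eigenProj_neg hl, add_sub_cancel,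
    transpose_one]

lemma bell_term_spectralPOVM (hl : l ≠ 0) (htr : trace (D ^ 2) = ((2 * l ^ 2 : ℝ) : ℂ)) :
    ⟪maxEntangled ι, toEuclideanLin
        ((spectralPOVM D l 0 - spectralPOVM D l 1) ⊗ₖ D) (maxEntangled ι)⟫
      - ((1 / 2 * l : ℝ) : ℂ) * ⟪maxEntangled ι, toEuclideanLin
        ((spectralPOVM D l 0 + spectralPOVM D l 1) ⊗ₖ (1 : Matrix ι ι ℂ)) (maxEntangled ι)⟫
      = l / Fintype.card ι := by
  simp only [spectralPOVM, cons_val_zero, cons_val_one, ← transpose_add, ← transpose_sub,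
    eigenProj_sub_eigenProj_neg, eigenProj_add_eigenProj_neg hl,
    inner_maxEntangled_toEuclideanLin_kronecker, transpose_transpose, smul_mul, mul_one,
    ← sq, trace_smul, htr, Complex.real_smul]
  have hl' : (l : ℂ) ≠ 0 := Complex.ofReal_ne_zero.mpr hl
  push_cast
  field_simp
  ring

end SpectralPOVM

section Unbiased

variable {d : ℕ} {v w : EuclideanSpace ℂ (Fin d)}

lemma one_sub_one_div_eq_sqrt_sq (hd : 0 < d) :
    1 - 1 / (d : ℝ) = Real.sqrt ((d - 1) / d) ^ 2 := by
  have hd' : (1 : ℝ) ≤ d := Nat.one_le_cast.mpr hd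
  rw [Real.sq_sqrt (div_nonneg (by linarith) (by linarith))]
  field_simp

lemma sqrt_sub_one_div_ne_zero (hd : 2 ≤ d) : Real.sqrt ((d - 1) / d) ≠ 0 := by
  have hd' : (2 : ℝ) ≤ d := Nat.ofNat_le_cast.mpr hd
  exact (Real.sqrt_pos.mpr (div_pos (by linarith) (by linarith))).ne'

lemma sqrt_mul_sub_one_eq_mul_sqrt (hd : 0 < d) :
    Real.sqrt (d * (d - 1)) = d * Real.sqrt ((d - 1) / d) := by
  have hd' : (0 : ℝ) < d := Nat.cast_pos.mpr hd
  rw [show (d : ℝ) * (d - 1) = d ^ 2 * ((d - 1) / d) by field_simp, Real.sqrt_mul (sq_nonneg _),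
    Real.sqrt_sq hd'.le]

lemma outerProj_sub_outerProj_pow_three_of_unbiased (hd : 0 < d) (hv : ‖v‖ = 1) (hw : ‖w‖ = 1)
    (hvw : ‖⟪v, w⟫‖ ^ 2 = 1 / d) :
    (outerProj v - outerProj w) ^ 3
      = Real.sqrt ((d - 1) / d) ^ 2 • (outerProj v - outerProj w) := by
  rw [outerProj_sub_outerProj_pow_three hv hw, hvw, one_sub_one_div_eq_sqrt_sq hd]

lemma bell_term_of_unbiased (hd : 2 ≤ d) (hv : ‖v‖ = 1) (hw : ‖w‖ = 1)
    (hvw : ‖⟪v, w⟫‖ ^ 2 = 1 / d) :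
    ⟪maxEntangled (Fin d), toEuclideanLin
        ((spectralPOVM (outerProj v - outerProj w) (Real.sqrt ((d - 1) / d)) 0
          - spectralPOVM (outerProj v - outerProj w) (Real.sqrt ((d - 1) / d)) 1)
          ⊗ₖ (outerProj v - outerProj w)) (maxEntangled (Fin d))⟫
      - ((1 / 2 * Real.sqrt ((d - 1) / d) : ℝ) : ℂ) * ⟪maxEntangled (Fin d), toEuclideanLin
        ((spectralPOVM (outerProj v - outerProj w) (Real.sqrt ((d - 1) / d)) 0
          + spectralPOVM (outerProj v - outerProj w) (Real.sqrt ((d - 1) / d)) 1)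
          ⊗ₖ (1 : Matrix (Fin d) (Fin d) ℂ)) (maxEntangled (Fin d))⟫
      = Real.sqrt ((d - 1) / d) / d := by
  refine (bell_term_spectralPOVM (sqrt_sub_one_div_ne_zero hd) ?_).trans (by rw [Fintype.card_fin])
  rw [trace_outerProj_sub_outerProj_sq hv hw, hvw, one_sub_one_div_eq_sqrt_sq (by omega)]

end Unbiased

theorem stmt_13_general (d n : ℕ) (hd : 2 ≤ d)
    (b : Fin n → Fin d → EuclideanSpace ℂ (Fin d))
    (hb : ∀ y, Orthonormal ℂ (b y))
    (hmub : ∀ y z, y ≠ z → ∀ j k, ‖⟪b y j, b z k⟫‖ ^ 2 = 1 / d) :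
    ∃ (ψ : EuclideanSpace ℂ (Fin d × Fin d))
      (A : Fin n → Fin n → Fin d → Fin d → Fin 3 → Matrix (Fin d) (Fin d) ℂ),
      ‖ψ‖ = 1 ∧
      (∀ y z : Fin n, y < z → ∀ j k : Fin d,
        (∀ a, (A y z j k a).PosSemidef) ∧ (∑ a, A y z j k a = 1)) ∧
      (∑ p ∈ Finset.univ.filter (fun p : Fin n × Fin n => p.1 < p.2), ∑ j, ∑ k,
          (⟪ψ, (Matrix.toEuclideanLin
              ((A p.1 p.2 j k 0 - A p.1 p.2 j k 1) ⊗ₖ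
                (outerProj (b p.1 j) - outerProj (b p.2 k)))) ψ⟫
            - (((1 / 2) * Real.sqrt ((d - 1) / d) : ℝ) : ℂ) *
              ⟪ψ, (Matrix.toEuclideanLin
                ((A p.1 p.2 j k 0 + A p.1 p.2 j k 1) ⊗ₖ
                  (1 : Matrix (Fin d) (Fin d) ℂ))) ψ⟫))
        = (((n * (n - 1) / 2 : ℝ) * Real.sqrt (d * (d - 1)) : ℝ) : ℂ) := by
  have : NeZero d := ⟨by omega⟩
  have hl : Real.sqrt ((d - 1) / d) ≠ 0 := sqrt_sub_one_div_ne_zero hd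
  refine ⟨maxEntangled (Fin d), fun y z j k =>
    spectralPOVM (outerProj (b y j) - outerProj (b z k)) (Real.sqrt ((d - 1) / d)),
    norm_maxEntangled, fun y z hyz j k => ⟨posSemidef_spectralPOVM
      ((isSelfAdjoint_outerProj _).sub (isSelfAdjoint_outerProj _)) hl
      (outerProj_sub_outerProj_pow_three_of_unbiased (by omega) ((hb y).1 j) ((hb z).1 k)
        (hmub y z hyz.ne j k)), sum_spectralPOVM hl⟩, ?_⟩
  have hterm := fun y z (hyz : y ≠ z) j k =>
    bell_term_of_unbiased hd ((hb y).1 j) ((hb z).1 k) (hmub y z hyz j k)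
  rw [Finset.sum_congr rfl fun p hp => Finset.sum_congr rfl fun j _ => Finset.sum_congr rfl
    fun k _ => hterm p.1 p.2 (Finset.mem_filter.mp hp).2.ne j k]
  have hpairs : #(Finset.univ.filter fun p : Fin n × Fin n => p.1 < p.2) = n.choose 2 := by
    rw [← Finset.univ_product_univ, Finset.card_product_filter_lt, Finset.card_univ,
      Fintype.card_fin]
  simp only [Finset.sum_const, hpairs, Finset.card_univ, Fintype.card_fin, nsmul_eq_mul,
    sqrt_mul_sub_one_eq_mul_sqrt (by omega : 0 < d)]
  push_cast [Nat.cast_choose_two]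
  field_simp

theorem stmt_13 (d n : ℕ) (hd : 2 ≤ d) (hn : 2 ≤ n)
    (b : Fin n → Fin d → EuclideanSpace ℂ (Fin d))
    (hb : ∀ y, Orthonormal ℂ (b y))
    (hbspan : ∀ y, Submodule.span ℂ (Set.range (b y)) = ⊤)
    (hmub : ∀ y z, y ≠ z → ∀ j k, ‖⟪b y j, b z k⟫‖ ^ 2 = 1 / d) :
    ∃ (ψ : EuclideanSpace ℂ (Fin d × Fin d))
      (A : Fin n → Fin n → Fin d → Fin d → Fin 3 → Matrix (Fin d) (Fin d) ℂ),
      ‖ψ‖ = 1 ∧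
      (∀ y z : Fin n, y < z → ∀ j k : Fin d,
        (∀ a, (A y z j k a).PosSemidef) ∧ (∑ a, A y z j k a = 1)) ∧
      (∑ p ∈ Finset.univ.filter (fun p : Fin n × Fin n => p.1 < p.2), ∑ j, ∑ k,
          (⟪ψ, (Matrix.toEuclideanLin
              ((A p.1 p.2 j k 0 - A p.1 p.2 j k 1) ⊗ₖ
                (outerProj (b p.1 j) - outerProj (b p.2 k)))) ψ⟫
            - (((1 / 2) * Real.sqrt ((d - 1) / d) : ℝ) : ℂ) *
              ⟪ψ, (Matrix.toEuclideanLin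
                ((A p.1 p.2 j k 0 + A p.1 p.2 j k 1) ⊗ₖ
                  (1 : Matrix (Fin d) (Fin d) ℂ))) ψ⟫))
        = (((n * (n - 1) / 2 : ℝ) * Real.sqrt (d * (d - 1)) : ℝ) : ℂ) :=
  stmt_13_general d n hd b hb hmub
end
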